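/- arXiv:2004.03083 — 6 statements merged into one kernel-verified Lean document; each statement's English description precedes it below -/
import Mathlib

section
/- Let ε^{(1)}, …, ε^{(L)} be i.i.d. standard Gaussian random variables, and let φ, φ' : ℝ → ℝ be measurable with 0 ≤ φ(ε) ≤ B, b' ≤ φ'(ε) ≤ B' for all ε, E[φ(ε)] ≥ ζ > 0, and E[φ'(ε)] = 0. Fix α ∈ (0, 1/2] and δ ∈ (0,1). If L > max{ (B'−b')², B²/ζ² } · log(4/δ)/(2α²), then with probability at least 1 − δ the sample ratio satisfies |(∑_{ℓ=1}^L φ'(ε^{(ℓ)})) / (∑_{ℓ=1}^L φ(ε^{(ℓ)}))| ≤ α/(ζ(1−α)) ≤ 2α/ζ. -/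
open MeasureTheory ProbabilityTheory Finset

open Real
open scoped NNReal

/-!
The numerator `∑ φ'(εₗ)` and the rescaled centred denominator `∑ (E φ - φ(εₗ)) / ζ` are sums of
independent bounded mean-zero variables, so by Hoeffding's lemma each summand is sub-Gaussian with
variance proxy `M / 4`, `M = max ((B' - b')², B² / ζ²)`. Hoeffding's inequality bounds each of the
three one-sided deviations `± ∑ φ' ≥ Lα` and `∑ (E φ - φ) / ζ ≥ Lα` by `exp (-2Lα² / M) < δ / 4`.
Off these events `|∑ φ'| < Lα` while `∑ φ > L (E φ - αζ) ≥ Lζ(1 - α)`, which bounds the ratio.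
-/

namespace ProbabilityTheory.HasSubgaussianMGF

variable {Ω : Type*} [MeasurableSpace Ω] {μ : Measure Ω} {X : Ω → ℝ}

lemma mono {c c' : ℝ≥0} (h : HasSubgaussianMGF X c μ) (hc : c ≤ c') :
    HasSubgaussianMGF X c' μ where
  integrable_exp_mul := h.integrable_exp_mul
  mgf_le t := (h.mgf_le t).trans <| exp_le_exp.2 <| by gcongr

end ProbabilityTheory.HasSubgaussianMGF

lemma abs_div_le_div_of_abs_lt_of_lt {N D n a b : ℝ} (ha : 0 ≤ a) (hb : 0 < b)
    (hN : |N| < n * a) (hD : n * b < D) : |N / D| ≤ a / b := by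
  have hn : 0 < n := pos_of_mul_pos_left ((abs_nonneg N).trans_lt hN) ha
  have hD0 : 0 < D := by nlinarith
  rw [abs_div, abs_of_pos hD0, div_le_div_iff₀ hD0 hb]
  nlinarith

section Sampling

variable {Ω E : Type*} [MeasurableSpace Ω] [MeasurableSpace E]

lemma hasSubgaussianMGF_of_forall_mem_Icc {μ : Measure E} [IsProbabilityMeasure μ] {f : E → ℝ}
    (hf : Measurable f) {a b : ℝ} (hab : ∀ x, f x ∈ Set.Icc a b) (h0 : ∫ x, f x ∂μ = 0)
    {c : ℝ≥0} (hc : (b - a) ^ 2 ≤ 4 * c) : HasSubgaussianMGF f c μ := by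
  refine (hasSubgaussianMGF_of_mem_Icc_of_integral_eq_zero hf.aemeasurable
    (ae_of_all _ hab) h0).mono ?_
  rw [← NNReal.coe_le_coe]
  push_cast
  rw [norm_eq_abs, div_pow, sq_abs]
  linarith

lemma hasSubgaussianMGF_integral_sub_div_of_forall_mem_Icc {μ : Measure E}
    [IsProbabilityMeasure μ] {f : E → ℝ} (hf : Measurable f) {a b : ℝ}
    (hab : ∀ x, f x ∈ Set.Icc a b) {ζ : ℝ} (hζ : 0 ≤ ζ) {c : ℝ≥0}
    (hc : ((b - a) / ζ) ^ 2 ≤ 4 * c) :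
    HasSubgaussianMGF (fun x => (∫ y, f y ∂μ - f x) / ζ) c μ := by
  have hf_int : Integrable f μ := .of_mem_Icc a b hf.aemeasurable (ae_of_all _ hab)
  refine hasSubgaussianMGF_of_forall_mem_Icc (a := (∫ y, f y ∂μ - b) / ζ)
    (b := (∫ y, f y ∂μ - a) / ζ) (by fun_prop) (fun x => ⟨?_, ?_⟩) ?_ ?_
  · exact div_le_div_of_nonneg_right (by linarith [(hab x).2]) hζ
  · exact div_le_div_of_nonneg_right (by linarith [(hab x).1]) hζ
  · rw [integral_div, integral_sub (integrable_const _) hf_int]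
    simp
  · rwa [div_sub_div_same, sub_sub_sub_cancel_left]

variable {P : Measure Ω} {ν : Measure E} {ε : ℕ → Ω → E}

lemma measureReal_sum_comp_ge_le (hmeas : ∀ i, Measurable (ε i)) (hindep : iIndepFun ε P)
    (hlaw : ∀ i, P.map (ε i) = ν) {f : E → ℝ} (hf : Measurable f) {c : ℝ≥0}
    (hfc : HasSubgaussianMGF f c ν) (n : ℕ) {t : ℝ} (ht : 0 ≤ t) :
    P.real {ω | n * t ≤ ∑ i ∈ range n, f (ε i ω)} ≤ exp (-(n * t ^ 2) / (2 * c)) := by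
  have hsub : ∀ i < n, HasSubgaussianMGF (f ∘ ε i) c P := fun i _ =>
    .of_map (hmeas i).aemeasurable (hlaw i ▸ hfc)
  have h := HasSubgaussianMGF.measure_sum_range_ge_le_of_iIndepFun
    (hindep.comp (fun _ => f) fun _ => hf) hsub (by positivity : (0 : ℝ) ≤ n * t)
  refine h.trans_eq (congrArg exp ?_)
  rcases n.eq_zero_or_pos with rfl | hn
  · simp
  · field_simp

lemma one_sub_le_measureReal_abs_sum_div_sum_le (hmeas : ∀ i, Measurable (ε i))
    (hindep : iIndepFun ε P) (hlaw : ∀ i, P.map (ε i) = ν) [IsProbabilityMeasure P]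
    {g f : E → ℝ} (hg : Measurable g) (hf : Measurable f) {m ζ α : ℝ} (hζ : 0 < ζ) (hm : ζ ≤ m)
    (hα : 0 ≤ α) (hα1 : α < 1) {c : ℝ≥0} (hgc : HasSubgaussianMGF g c ν)
    (hfc : HasSubgaussianMGF (fun x => (m - f x) / ζ) c ν) (n : ℕ) :
    1 - 3 * exp (-(n * α ^ 2) / (2 * c)) ≤
      P.real {ω | |(∑ i ∈ range n, g (ε i ω)) / ∑ i ∈ range n, f (ε i ω)| ≤ α / (ζ * (1 - α))} := by
  set good := {ω | |(∑ i ∈ range n, g (ε i ω)) / ∑ i ∈ range n, f (ε i ω)| ≤ α / (ζ * (1 - α))}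
  set bad : (E → ℝ) → Set Ω := fun h => {ω | n * α ≤ ∑ i ∈ range n, h (ε i ω)}
  have hbad : ∀ h : E → ℝ, Measurable h → HasSubgaussianMGF h c ν →
      P.real (bad h) ≤ exp (-(n * α ^ 2) / (2 * c)) := fun h hh hhc =>
    measureReal_sum_comp_ge_le hmeas hindep hlaw hh hhc n hα
  have hgood : (bad g ∪ bad (-g) ∪ bad fun x => (m - f x) / ζ)ᶜ ⊆ good := by
    intro ω hω
    simp only [bad, Set.compl_union, Set.mem_inter_iff, Set.mem_compl_iff, Set.mem_ofPred_eq,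
      not_le, Pi.neg_apply, sum_neg_distrib, ← sum_div, sum_sub_distrib, sum_const, card_range,
      nsmul_eq_mul] at hω
    obtain ⟨⟨hg_lt, hg_gt⟩, hf_gt⟩ := hω
    refine abs_div_le_div_of_abs_lt_of_lt hα (by nlinarith) (abs_lt.2 ⟨by linarith, hg_lt⟩) ?_
    rw [div_lt_iff₀ hζ] at hf_gt
    nlinarith
  calc 1 - 3 * exp (-(n * α ^ 2) / (2 * c))
      ≤ 1 - (P.real (bad g) + P.real (bad (-g)) + P.real (bad fun x => (m - f x) / ζ)) := by
        linarith [hbad g hg hgc, hbad (-g) hg.neg hgc.neg, hbad _ (by fun_prop) hfc]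
    _ ≤ 1 - P.real (bad g ∪ bad (-g) ∪ bad fun x => (m - f x) / ζ) := by
        gcongr
        exact (measureReal_union_le _ _).trans (by gcongr; exact measureReal_union_le _ _)
    _ ≤ _ := by
        rw [← probReal_compl_eq_one_sub (by measurability)]
        exact measureReal_mono hgood

end Sampling

lemma exp_neg_mul_sq_div_lt_of_lt {M α δ L : ℝ} (hM : 0 < M) (hα : 0 < α) (hδ : 0 < δ)
    (hL : L > M * log (4 / δ) / (2 * α ^ 2)) : exp (-(L * α ^ 2) / (2 * (M / 4))) < δ / 4 := by
  rw [← lt_log_iff_exp_lt (by positivity), show δ / 4 = (4 / δ)⁻¹ by field_simp, log_inv,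
    neg_div, neg_lt_neg_iff, lt_div_iff₀ (by positivity)]
  rw [gt_iff_lt, div_lt_iff₀ (by positivity)] at hL
  linarith

lemma div_mul_one_sub_le_two_mul_div {α ζ : ℝ} (hζ : 0 < ζ) (hα0 : 0 ≤ α) (hα : α ≤ 1 / 2) :
    α / (ζ * (1 - α)) ≤ 2 * α / ζ := by
  rw [div_le_div_iff₀ (by nlinarith) hζ]
  nlinarith [mul_nonneg (mul_nonneg hα0 hζ.le) (by linarith : (0 : ℝ) ≤ 1 - 2 * α)]

/-- Bias bound for the bMC ratio estimator, degenerate case (`E[φ'(ε)] = 0`): for i.i.d.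
standard Gaussians `ε^{(ℓ)}`, bounded `0 ≤ φ ≤ B`, `b' ≤ φ' ≤ B'`, `E[φ(ε)] ≥ ζ > 0`,
`α ∈ (0, 1/2]`, `δ ∈ (0,1)`, and `L > max{(B'−b')², B²/ζ²}·log(4/δ)/(2α²)`, with
probability at least `1 − δ` the ratio of sample sums satisfies
`|∑φ'(ε^{(ℓ)}) / ∑φ(ε^{(ℓ)})| ≤ α/(ζ(1−α)) ≤ 2α/ζ`. -/
theorem bMC_ratio_bound_zero_mean
    {Ω : Type*} [MeasurableSpace Ω] (P : Measure Ω) [IsProbabilityMeasure P]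
    (ε : ℕ → Ω → ℝ) (hmeas : ∀ i, Measurable (ε i))
    (hindep : iIndepFun ε P)
    (hgauss : ∀ i, P.map (ε i) = gaussianReal 0 1)
    (φ φ' : ℝ → ℝ) (hφ_meas : Measurable φ) (hφ'_meas : Measurable φ')
    (B b' B' ζ : ℝ)
    (hφ_bdd : ∀ x, 0 ≤ φ x ∧ φ x ≤ B)
    (hφ'_bdd : ∀ x, b' ≤ φ' x ∧ φ' x ≤ B')
    (hζ : 0 < ζ)
    (hEφ : ζ ≤ ∫ x, φ x ∂(gaussianReal 0 1))
    (hEφ' : (∫ x, φ' x ∂(gaussianReal 0 1)) = 0)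
    (α δ : ℝ) (hα : α ∈ Set.Ioc (0 : ℝ) (1 / 2)) (hδ : δ ∈ Set.Ioo (0 : ℝ) 1)
    (L : ℕ)
    (hL : (L : ℝ) >
      max ((B' - b') ^ 2) (B ^ 2 / ζ ^ 2) * Real.log (4 / δ) / (2 * α ^ 2)) :
    ENNReal.ofReal (1 - δ) ≤
      P {ω | |(∑ l ∈ Finset.range L, φ' (ε l ω)) / (∑ l ∈ Finset.range L, φ (ε l ω))|
              ≤ α / (ζ * (1 - α))} ∧
    α / (ζ * (1 - α)) ≤ 2 * α / ζ := by
  obtain ⟨hα0, hα2⟩ := hα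
  refine ⟨?_, div_mul_one_sub_le_two_mul_div hζ hα0.le hα2⟩
  set M := max ((B' - b') ^ 2) (B ^ 2 / ζ ^ 2)
  have hM : 0 < M := by
    have hB : ζ ≤ B := hEφ.trans <| by
      simpa using integral_mono (μ := gaussianReal 0 1) (Integrable.of_mem_Icc 0 B hφ_meas.aemeasurable
        (ae_of_all _ hφ_bdd)) (integrable_const B) fun x => (hφ_bdd x).2
    exact lt_max_of_lt_right (by have := hζ.trans_le hB; positivity)
  set c : ℝ≥0 := ⟨M / 4, by positivity⟩
  have hc : (c : ℝ) = M / 4 := rfl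
  have hφ'c : HasSubgaussianMGF φ' c (gaussianReal 0 1) :=
    hasSubgaussianMGF_of_forall_mem_Icc hφ'_meas hφ'_bdd hEφ' <| by
      linarith [le_max_left ((B' - b') ^ 2) (B ^ 2 / ζ ^ 2)]
  have hφc := hasSubgaussianMGF_integral_sub_div_of_forall_mem_Icc (μ := gaussianReal 0 1)
    hφ_meas hφ_bdd hζ.le (c := c) <| by
      rw [hc, sub_zero, div_pow]
      linarith [le_max_right ((B' - b') ^ 2) (B ^ 2 / ζ ^ 2)]
  have hratio := one_sub_le_measureReal_abs_sum_div_sum_le hmeas hindep hgauss hφ'_meas hφ_meas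
    hζ hEφ hα0.le (by linarith) hφ'c hφc L
  have htail := exp_neg_mul_sq_div_lt_of_lt hM hα0 hδ.1 hL
  rw [hc] at hratio
  rw [← ofReal_measureReal]
  exact ENNReal.ofReal_le_ofReal (by linarith [hδ.1])
end

section
/- Let ε^{(1)}, …, ε^{(L)} be i.i.d. standard Gaussian random variables, and let φ, φ' : ℝ → ℝ be measurable with 0 ≤ φ(ε) ≤ B and b' ≤ φ'(ε) ≤ B' for all ε, E[φ(ε)] ≥ ζ > 0, and E[φ'(ε)] ≠ 0. Let B* = max{B, |b'|, |B'|}. Fix α ∈ (0, 1/2] and δ ∈ (0,1). If L > max{ B²/(E[φ(ε)])², (B'−b')²/(E[φ'(ε)])² } · log(4/δ)/(2α²), then with probability at least 1 − δ: |(∑_{ℓ=1}^L φ'(ε^{(ℓ)})) / (∑_{ℓ=1}^L φ(ε^{(ℓ)})) − E[φ'(ε)]/E[φ(ε)]| ≤ (2α/(1−α)) · |E[φ'(ε)]/E[φ(ε)]| ≤ 4αB*/ζ. -/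
open MeasureTheory ProbabilityTheory Finset

lemma aux_D_pos (p : ℝ) (hp0 : 0 ≤ p) (hp1 : p ≤ 1) (h : ℝ) :
    0 < 1 - p + p * Real.exp h := by
  rcases eq_or_lt_of_le hp1 with rfl | hlt
  · simpa using Real.exp_pos h
  · nlinarith [Real.exp_pos h, mul_nonneg hp0 (Real.exp_pos h).le]

lemma aux_exp_ineq (p : ℝ) (hp0 : 0 ≤ p) (hp1 : p ≤ 1) (h : ℝ) :
    1 - p + p * Real.exp h ≤ Real.exp (p * h + h ^ 2 / 8) := by
  set F : ℝ → ℝ := fun x => p * x + x ^ 2 / 8 - Real.log (1 - p + p * Real.exp x) with hFdef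
  set G : ℝ → ℝ := fun x => p + x / 4 - p * Real.exp x / (1 - p + p * Real.exp x) with hGdef
  have hDpos : ∀ x, 0 < 1 - p + p * Real.exp x := aux_D_pos p hp0 hp1
  have hD : ∀ x : ℝ, HasDerivAt (fun y => 1 - p + p * Real.exp y) (p * Real.exp x) x := by
    intro x
    simpa using ((Real.hasDerivAt_exp x).const_mul p).const_add (1 - p)
  have hF : ∀ x, HasDerivAt F (G x) x := by
    intro x
    have hlog := (hD x).log (hDpos x).ne'
    have h1 : HasDerivAt (fun y : ℝ => p * y + y ^ 2 / 8) (p + x / 4) x := by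
      have := ((hasDerivAt_id x).const_mul p).add ((hasDerivAt_pow 2 x).div_const 8)
      exact this.congr_deriv (by ring)
    exact h1.sub hlog
  have hG : ∀ x, HasDerivAt G
      (1 / 4 - p * Real.exp x * (1 - p) / (1 - p + p * Real.exp x) ^ 2) x := by
    intro x
    have hN : HasDerivAt (fun y : ℝ => p * Real.exp y) (p * Real.exp x) x :=
      (Real.hasDerivAt_exp x).const_mul p
    have hdiv := hN.div (hD x) (hDpos x).ne'
    have h1 : HasDerivAt (fun y : ℝ => p + y / 4) (1 / 4) x := by
      simpa using ((hasDerivAt_id x).div_const 4).const_add p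
    have := h1.sub hdiv
    refine this.congr_deriv ?_
    have hne := (hDpos x).ne'
    field_simp
    ring
  have hGmono : Monotone G := by
    refine monotone_of_deriv_nonneg (fun x => (hG x).differentiableAt) (fun x => ?_)
    rw [(hG x).deriv]
    have hne := hDpos x
    rw [sub_nonneg, div_le_iff₀ (by positivity)]
    nlinarith [sq_nonneg (1 - p - p * Real.exp x), mul_nonneg hp0 (Real.exp_pos x).le]
  have hG0 : G 0 = 0 := by simp [hGdef]
  have hF0 : F 0 = 0 := by simp [hFdef]
  have hFnonneg : ∀ x, 0 ≤ F x := by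
    intro x
    rcases le_total 0 x with hx | hx
    · have hmono : MonotoneOn F (Set.Ici 0) := by
        refine monotoneOn_of_deriv_nonneg (convex_Ici 0)
          (fun y _ => ((hF y).differentiableAt).continuousAt.continuousWithinAt)
          (fun y _ => ((hF y).differentiableAt).differentiableWithinAt) (fun y hy => ?_)
        rw [(hF y).deriv, ← hG0]
        exact hGmono (le_of_lt (by simpa using hy))
      have := hmono (Set.self_mem_Ici) (by exact hx) hx
      rwa [hF0] at this
    · have hanti : AntitoneOn F (Set.Iic 0) := by
        refine antitoneOn_of_deriv_nonpos (convex_Iic 0)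
          (fun y _ => ((hF y).differentiableAt).continuousAt.continuousWithinAt)
          (fun y _ => ((hF y).differentiableAt).differentiableWithinAt) (fun y hy => ?_)
        rw [(hF y).deriv, ← hG0]
        exact hGmono (le_of_lt (by simpa using hy))
      have := hanti (by exact hx) (Set.self_mem_Iic) hx
      rwa [hF0] at this
  have hlog : Real.log (1 - p + p * Real.exp h) ≤ p * h + h ^ 2 / 8 := by
    have := hFnonneg h
    simp only [hFdef] at this
    linarith
  calc 1 - p + p * Real.exp h = Real.exp (Real.log (1 - p + p * Real.exp h)) :=
        (Real.exp_log (hDpos h)).symm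
    _ ≤ _ := Real.exp_le_exp.mpr hlog

lemma integrable_of_bdd {Ω : Type*} [MeasurableSpace Ω] {P : Measure Ω} [IsFiniteMeasure P]
    {f : Ω → ℝ} (hf : Measurable f) {C : ℝ} (h : ∀ ω, |f ω| ≤ C) : Integrable f P :=
  ⟨hf.aestronglyMeasurable, HasFiniteIntegral.of_bounded (C := C) (ae_of_all _ h)⟩

lemma hoeffding_mgf (ν : Measure ℝ) [IsProbabilityMeasure ν] (g : ℝ → ℝ)
    (hg : Measurable g) (a b : ℝ) (hbd : ∀ x, a ≤ g x ∧ g x ≤ b) (t : ℝ) :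
    ∫ x, Real.exp (t * g x) ∂ν ≤
      Real.exp (t * (∫ x, g x ∂ν) + t ^ 2 * (b - a) ^ 2 / 8) := by
  have hab : a ≤ b := le_trans (hbd 0).1 (hbd 0).2
  have hgabs : ∀ x, |g x| ≤ |a| + |b| := by
    intro x
    rcases hbd x with ⟨h1, h2⟩
    rw [abs_le]
    refine ⟨by linarith [neg_abs_le a, abs_nonneg b], by linarith [le_abs_self b, abs_nonneg a]⟩
  have hg_int : Integrable g ν := integrable_of_bdd hg hgabs
  have hma : a ≤ ∫ x, g x ∂ν := by
    calc a = ∫ _x, a ∂ν := by simp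
      _ ≤ _ := integral_mono (integrable_const a) hg_int (fun x => (hbd x).1)
  have hmb : (∫ x, g x ∂ν) ≤ b := by
    calc (∫ x, g x ∂ν) ≤ ∫ _x, b ∂ν :=
          integral_mono hg_int (integrable_const b) (fun x => (hbd x).2)
      _ = b := by simp
  rcases eq_or_lt_of_le hab with rfl | hab'
  · have hgx : ∀ x, g x = a := fun x => le_antisymm (hbd x).2 (hbd x).1
    simp [hgx, le_of_eq, Real.exp_le_exp]

  set m := ∫ x, g x ∂ν with hm
  set c := b - a with hc
  have hcpos : 0 < c := sub_pos.mpr hab'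
  set e1 := Real.exp (t * a) with he1
  set e2 := Real.exp (t * b) with he2
  set k := (e2 - e1) / c with hk
  set C := (b * e1 - a * e2) / c with hC
  have hpt : ∀ x, Real.exp (t * g x) ≤ k * g x + C := by
    intro x
    rcases hbd x with ⟨h1, h2⟩
    set s := (g x - a) / c with hs
    have hs0 : 0 ≤ s := div_nonneg (by linarith) hcpos.le
    have h1s : 0 ≤ 1 - s := by
      rw [sub_nonneg, hs, div_le_one hcpos]; linarith
    have key := convexOn_exp.2 (Set.mem_univ (t * a)) (Set.mem_univ (t * b)) h1s hs0
      (by ring : (1 - s) + s = 1)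
    simp only [smul_eq_mul] at key
    have hsc : s * c = g x - a := by rw [hs, div_mul_cancel₀ _ hcpos.ne']
    have harg : (1 - s) * (t * a) + s * (t * b) = t * g x := by
      have h3 : a + s * c = g x := by linarith
      calc (1 - s) * (t * a) + s * (t * b) = t * (a + s * (b - a)) := by ring
        _ = t * g x := by rw [← hc, h3]
    rw [harg] at key
    refine key.trans (le_of_eq ?_)
    rw [hk, hC, hs]
    field_simp
    rw [hc, he1, he2, mul_comm a t]
    ring
  have hLHSint : Integrable (fun x => Real.exp (t * g x)) ν := by
    refine integrable_of_bdd ((hg.const_mul t).exp) (C := Real.exp (|t| * (|a| + |b|))) ?_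
    intro x
    rw [abs_of_pos (Real.exp_pos _), Real.exp_le_exp]
    calc t * g x ≤ |t * g x| := le_abs_self _
      _ = |t| * |g x| := abs_mul t (g x)
      _ ≤ |t| * (|a| + |b|) := mul_le_mul_of_nonneg_left (hgabs x) (abs_nonneg t)
  set σ := (m - a) / c with hσ
  have hσ0 : 0 ≤ σ := div_nonneg (by linarith) hcpos.le
  have hσ1 : σ ≤ 1 := by rw [hσ, div_le_one hcpos]; linarith
  have key2 := aux_exp_ineq σ hσ0 hσ1 (t * c)
  calc ∫ x, Real.exp (t * g x) ∂ν ≤ ∫ x, (k * g x + C) ∂ν :=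
        integral_mono hLHSint ((hg_int.const_mul k).add (integrable_const C)) hpt
    _ = k * m + C := by
        rw [integral_add (hg_int.const_mul k) (integrable_const C), integral_const_mul k,
          integral_const]
        simp [hm]
    _ = e1 * (1 - σ + σ * Real.exp (t * c)) := by
        have hec : Real.exp (t * c) = e2 / e1 := by
          rw [he1, he2, ← Real.exp_sub]
          congr 1
          rw [hc]; ring
        rw [hec, hk, hC, hσ]
        have he1pos := Real.exp_pos (t * a)
        rw [← he1] at he1pos
        field_simp
        ring
    _ ≤ e1 * Real.exp (σ * (t * c) + (t * c) ^ 2 / 8) := by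
        exact mul_le_mul_of_nonneg_left key2 (Real.exp_pos _).le
    _ = Real.exp (t * m + t ^ 2 * c ^ 2 / 8) := by
        rw [he1, ← Real.exp_add]
        congr 1
        have hσc : σ * c = m - a := by rw [hσ]; field_simp
        have : σ * (t * c) = t * (m - a) := by rw [mul_comm t c, ← mul_assoc, hσc]; ring
        rw [this]; ring

lemma chernoff_tail {Ω : Type*} [MeasurableSpace Ω] (P : Measure Ω) [IsProbabilityMeasure P]
    (ε : ℕ → Ω → ℝ) (hmeas : ∀ i, Measurable (ε i))
    (hindep : iIndepFun ε P)
    (hgauss : ∀ i, P.map (ε i) = gaussianReal 0 1)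
    (g : ℝ → ℝ) (hg : Measurable g) (a b : ℝ) (hbd : ∀ x, a ≤ g x ∧ g x ≤ b)
    (hab : a < b) (L : ℕ) (hLpos : 0 < L) (s : ℝ) (hs : 0 < s) :
    P {ω | (L : ℝ) * (∫ x, g x ∂(gaussianReal 0 1)) + s ≤ ∑ l ∈ Finset.range L, g (ε l ω)}
      ≤ ENNReal.ofReal (Real.exp (-2 * s ^ 2 / (L * (b - a) ^ 2))) := by
  set ν := gaussianReal 0 1 with hν
  set m := ∫ x, g x ∂ν with hm
  set c := b - a with hc
  have hcpos : 0 < c := sub_pos.mpr hab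
  have hLR : (0 : ℝ) < L := Nat.cast_pos.mpr hLpos
  set t := 4 * s / (L * c ^ 2) with ht
  have htpos : 0 < t := by positivity
  set Y : ℕ → Ω → ℝ := fun i ω => g (ε i ω) with hY
  have hYmeas : ∀ i, Measurable (Y i) := fun i => hg.comp (hmeas i)
  have hYindep : iIndepFun Y P :=
    hindep.comp (fun _ => g) (fun _ => hg)
  have hgabs : ∀ x, |g x| ≤ |a| + |b| := by
    intro x
    rcases hbd x with ⟨h1, h2⟩
    rw [abs_le]
    refine ⟨by linarith [neg_abs_le a, abs_nonneg b], by linarith [le_abs_self b, abs_nonneg a]⟩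
  have hint : ∀ i, Integrable (fun ω => Real.exp (t * Y i ω)) P := by
    intro i
    refine integrable_of_bdd (((hYmeas i).const_mul t).exp)
      (C := Real.exp (|t| * (|a| + |b|))) ?_
    intro ω
    rw [abs_of_pos (Real.exp_pos _), Real.exp_le_exp]
    calc t * Y i ω ≤ |t * Y i ω| := le_abs_self _
      _ = |t| * |Y i ω| := abs_mul _ _
      _ ≤ |t| * (|a| + |b|) := mul_le_mul_of_nonneg_left (hgabs _) (abs_nonneg t)
  have hint_sum : Integrable (fun ω => Real.exp (t * (∑ i ∈ Finset.range L, Y i) ω)) P :=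
    hYindep.integrable_exp_mul_sum hYmeas (fun i _ => hint i)
  have hmgf_i : ∀ i, mgf (Y i) P t = ∫ x, Real.exp (t * g x) ∂ν := by
    intro i
    rw [mgf, ← hgauss i]
    exact (integral_map (hmeas i).aemeasurable
      (((hg.const_mul t).exp).aestronglyMeasurable)).symm
  have hmgf_bd : ∫ x, Real.exp (t * g x) ∂ν ≤ Real.exp (t * m + t ^ 2 * c ^ 2 / 8) :=
    hoeffding_mgf ν g hg a b hbd t
  have key := measure_ge_le_exp_mul_mgf (μ := P) (X := ∑ i ∈ Finset.range L, Y i)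
    ((L : ℝ) * m + s) htpos.le hint_sum
  rw [hYindep.mgf_sum hYmeas (Finset.range L)] at key
  have hexp_eq : -t * ((L : ℝ) * m + s) + (L : ℝ) * (t * m + t ^ 2 * c ^ 2 / 8) =
      -2 * s ^ 2 / (L * c ^ 2) := by
    rw [ht]
    field_simp
    ring
  have hprod : ∏ i ∈ Finset.range L, mgf (Y i) P t ≤
      Real.exp (t * m + t ^ 2 * c ^ 2 / 8) ^ L := by
    rw [Finset.prod_congr rfl (fun i _ => hmgf_i i), Finset.prod_const, Finset.card_range]
    exact pow_le_pow_left₀ (by positivity) hmgf_bd L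
  have key2 : (P {ω | (L : ℝ) * m + s ≤ (∑ i ∈ Finset.range L, Y i) ω}).toReal ≤
      Real.exp (-2 * s ^ 2 / (L * c ^ 2)) := by
    refine key.trans ?_
    calc Real.exp (-t * ((L : ℝ) * m + s)) * ∏ i ∈ Finset.range L, mgf (Y i) P t
        ≤ Real.exp (-t * ((L : ℝ) * m + s)) * Real.exp (t * m + t ^ 2 * c ^ 2 / 8) ^ L :=
          mul_le_mul_of_nonneg_left hprod (Real.exp_pos _).le
      _ = Real.exp (-t * ((L : ℝ) * m + s) + (L : ℝ) * (t * m + t ^ 2 * c ^ 2 / 8)) := by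
          rw [← Real.exp_nat_mul, ← Real.exp_add]
      _ = _ := by rw [hexp_eq]
  rw [ENNReal.le_ofReal_iff_toReal_le (measure_ne_top P _) (Real.exp_pos _).le]
  convert key2 using 3
  ext ω
  simp [Finset.sum_apply]
  exact Iff.rfl

lemma chernoff_two_sided {Ω : Type*} [MeasurableSpace Ω] (P : Measure Ω) [IsProbabilityMeasure P]
    (ε : ℕ → Ω → ℝ) (hmeas : ∀ i, Measurable (ε i))
    (hindep : iIndepFun ε P)
    (hgauss : ∀ i, P.map (ε i) = gaussianReal 0 1)
    (g : ℝ → ℝ) (hg : Measurable g) (a b : ℝ) (hbd : ∀ x, a ≤ g x ∧ g x ≤ b)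
    (hab : a < b) (L : ℕ) (hLpos : 0 < L) (s : ℝ) (hs : 0 < s) :
    P {ω | s < |(∑ l ∈ Finset.range L, g (ε l ω)) - (L : ℝ) * ∫ x, g x ∂(gaussianReal 0 1)|}
      ≤ ENNReal.ofReal (Real.exp (-2 * s ^ 2 / (L * (b - a) ^ 2))) +
        ENNReal.ofReal (Real.exp (-2 * s ^ 2 / (L * (b - a) ^ 2))) := by
  have h1 := chernoff_tail P ε hmeas hindep hgauss g hg a b hbd hab L hLpos s hs
  have h2 := chernoff_tail P ε hmeas hindep hgauss (fun x => -g x) hg.neg (-b) (-a)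
    (fun x => ⟨neg_le_neg (hbd x).2, neg_le_neg (hbd x).1⟩) (neg_lt_neg hab) L hLpos s hs
  rw [integral_neg] at h2
  have hsq : (-a - -b : ℝ) ^ 2 = (b - a) ^ 2 := by ring
  rw [hsq] at h2
  refine le_trans (measure_mono ?_) (le_trans (measure_union_le _ _) (add_le_add h1 h2))
  intro ω hω
  simp only [Set.mem_setOf_eq, Set.mem_union] at *
  rcases abs_cases ((∑ l ∈ Finset.range L, g (ε l ω)) -
      (L : ℝ) * ∫ x, g x ∂(gaussianReal 0 1)) with ⟨habs, _⟩ | ⟨habs, _⟩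
  · left; rw [habs] at hω; linarith
  · right
    rw [habs] at hω
    rw [Finset.sum_neg_distrib]
    linarith

set_option maxHeartbeats 1000000 in
/-- Bias bound for the bMC ratio estimator, nondegenerate case (`E[φ'(ε)] ≠ 0`): for
i.i.d. standard Gaussians `ε^{(ℓ)}`, bounded `0 ≤ φ ≤ B`, `b' ≤ φ' ≤ B'`,
`E[φ(ε)] ≥ ζ > 0`, `B* = max{B, |b'|, |B'|}`, `α ∈ (0, 1/2]`, `δ ∈ (0,1)`, and
`L > max{B²/E[φ]², (B'−b')²/E[φ']²}·log(4/δ)/(2α²)`, with probability at least `1 − δ`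
the ratio of sample sums is within `(2α/(1−α))·|E[φ']/E[φ]| ≤ 4αB*/ζ` of the ratio of
expectations. -/
theorem bMC_ratio_bound_nonzero_mean
    {Ω : Type*} [MeasurableSpace Ω] (P : Measure Ω) [IsProbabilityMeasure P]
    (ε : ℕ → Ω → ℝ) (hmeas : ∀ i, Measurable (ε i))
    (hindep : iIndepFun ε P)
    (hgauss : ∀ i, P.map (ε i) = gaussianReal 0 1)
    (φ φ' : ℝ → ℝ) (hφ_meas : Measurable φ) (hφ'_meas : Measurable φ')
    (B b' B' ζ Bstar : ℝ)
    (hφ_bdd : ∀ x, 0 ≤ φ x ∧ φ x ≤ B)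
    (hφ'_bdd : ∀ x, b' ≤ φ' x ∧ φ' x ≤ B')
    (hζ : 0 < ζ)
    (hEφ : ζ ≤ ∫ x, φ x ∂(gaussianReal 0 1))
    (hEφ' : (∫ x, φ' x ∂(gaussianReal 0 1)) ≠ 0)
    (hBstar : Bstar = max B (max |b'| |B'|))
    (α δ : ℝ) (hα : α ∈ Set.Ioc (0 : ℝ) (1 / 2)) (hδ : δ ∈ Set.Ioo (0 : ℝ) 1)
    (L : ℕ)
    (hL : (L : ℝ) >
      max (B ^ 2 / (∫ x, φ x ∂(gaussianReal 0 1)) ^ 2)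
          ((B' - b') ^ 2 / (∫ x, φ' x ∂(gaussianReal 0 1)) ^ 2) *
        Real.log (4 / δ) / (2 * α ^ 2)) :
    ENNReal.ofReal (1 - δ) ≤
      P {ω |
        |(∑ l ∈ Finset.range L, φ' (ε l ω)) / (∑ l ∈ Finset.range L, φ (ε l ω)) -
            (∫ x, φ' x ∂(gaussianReal 0 1)) / (∫ x, φ x ∂(gaussianReal 0 1))|
          ≤ (2 * α / (1 - α)) *
              |(∫ x, φ' x ∂(gaussianReal 0 1)) / (∫ x, φ x ∂(gaussianReal 0 1))|} ∧
    (2 * α / (1 - α)) *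
        |(∫ x, φ' x ∂(gaussianReal 0 1)) / (∫ x, φ x ∂(gaussianReal 0 1))| ≤
      4 * α * Bstar / ζ := by
  obtain ⟨hα0, hα2⟩ := hα
  obtain ⟨hδ0, hδ1⟩ := hδ
  set ν := gaussianReal 0 1 with hν
  set μ := ∫ x, φ x ∂ν with hμdef
  set μ' := ∫ x, φ' x ∂ν with hμ'def
  have hμpos : 0 < μ := lt_of_lt_of_le hζ hEφ
  -- integrability and integral bounds
  have hφabs : ∀ x, |φ x| ≤ B := by
    intro x
    rcases hφ_bdd x with ⟨h1, h2⟩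
    rw [abs_le]; constructor <;> linarith
  have hφ'absbd : ∀ x, |φ' x| ≤ |b'| + |B'| := by
    intro x
    rcases hφ'_bdd x with ⟨h1, h2⟩
    rw [abs_le]
    refine ⟨by linarith [neg_abs_le b', abs_nonneg B'], by linarith [le_abs_self B', abs_nonneg b']⟩
  have hφ_int : Integrable φ ν := integrable_of_bdd hφ_meas hφabs
  have hφ'_int : Integrable φ' ν := integrable_of_bdd hφ'_meas hφ'absbd
  have hμB : μ ≤ B := by
    calc μ ≤ ∫ _x, B ∂ν := integral_mono hφ_int (integrable_const B) (fun x => (hφ_bdd x).2)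
      _ = B := by simp
  have hBpos : 0 < B := lt_of_lt_of_le hμpos hμB
  have hμ'b : b' ≤ μ' := by
    calc b' = ∫ _x, b' ∂ν := by simp
      _ ≤ μ' := integral_mono (integrable_const b') hφ'_int (fun x => (hφ'_bdd x).1)
  have hμ'B : μ' ≤ B' := by
    calc μ' ≤ ∫ _x, B' ∂ν := integral_mono hφ'_int (integrable_const B') (fun x => (hφ'_bdd x).2)
      _ = B' := by simp
  have hb'B' : b' ≤ B' := hμ'b.trans hμ'B
  have hμ'abs : |μ'| ≤ Bstar := by
    rw [hBstar, abs_le]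
    constructor
    · have : -(max B (max |b'| |B'|)) ≤ -|b'| := by
        simp only [neg_le_neg_iff]
        exact le_max_of_le_right (le_max_left _ _)
      linarith [neg_abs_le b']
    · exact le_trans (le_trans hμ'B (le_abs_self B'))
        (le_max_of_le_right (le_max_right _ _))
  have hμ'abspos : 0 < |μ'| := abs_pos.mpr hEφ'
  have h1α : 0 < 1 - α := by linarith
  -- Part 2
  have part2 : (2 * α / (1 - α)) * |μ' / μ| ≤ 4 * α * Bstar / ζ := by
    have hBstar0 : 0 ≤ Bstar := le_trans (abs_nonneg μ') hμ'abs
    have h1 : 2 * α / (1 - α) ≤ 4 * α := by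
      rw [div_le_iff₀ h1α]
      nlinarith
    have h2 : |μ' / μ| ≤ Bstar / ζ := by
      rw [abs_div, abs_of_pos hμpos]
      exact div_le_div₀ hBstar0 hμ'abs hζ hEφ
    calc (2 * α / (1 - α)) * |μ' / μ| ≤ (4 * α) * (Bstar / ζ) :=
          mul_le_mul h1 h2 (abs_nonneg _) (by positivity)
      _ = 4 * α * Bstar / ζ := by ring
  refine ⟨?_, part2⟩
  -- numeric helper
  have hlg : 0 < Real.log (4 / δ) := Real.log_pos (by rw [lt_div_iff₀ hδ0]; linarith)
  set lg := Real.log (4 / δ) with hlgdef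
  have hLR : (0 : ℝ) < L := by
    refine lt_trans ?_ hL
    have : 0 < B ^ 2 / μ ^ 2 := by positivity
    have hmax : 0 < max (B ^ 2 / μ ^ 2) ((B' - b') ^ 2 / μ' ^ 2) :=
      lt_of_lt_of_le this (le_max_left _ _)
    positivity
  have hLpos : 0 < L := by exact_mod_cast hLR
  have hnum : ∀ c mm : ℝ, 0 < c → 0 < mm → c ^ 2 / mm ^ 2 * lg / (2 * α ^ 2) < (L : ℝ) →
      Real.exp (-2 * ((L : ℝ) * α * mm) ^ 2 / ((L : ℝ) * c ^ 2)) ≤ δ / 4 := by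
    intro c mm hc hmm hyp
    have hδ4 : (0 : ℝ) < δ / 4 := by positivity
    rw [show δ / 4 = Real.exp (Real.log (δ / 4)) from (Real.exp_log hδ4).symm,
      Real.exp_le_exp]
    have hlogeq : Real.log (δ / 4) = -lg := by
      rw [hlgdef, Real.log_div hδ0.ne' (by norm_num),
        Real.log_div (by norm_num) hδ0.ne']
      ring
    rw [hlogeq]
    have hyp' : c ^ 2 * lg / (mm ^ 2 * (2 * α ^ 2)) < (L : ℝ) := by
      calc c ^ 2 * lg / (mm ^ 2 * (2 * α ^ 2)) = c ^ 2 / mm ^ 2 * lg / (2 * α ^ 2) := by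
            field_simp
        _ < (L : ℝ) := hyp
    have h2 : c ^ 2 * lg < (L : ℝ) * (mm ^ 2 * (2 * α ^ 2)) :=
      (div_lt_iff₀ (by positivity)).1 hyp'
    have h3 : lg ≤ 2 * ((L : ℝ) * α * mm) ^ 2 / ((L : ℝ) * c ^ 2) := by
      rw [le_div_iff₀ (by positivity)]
      nlinarith [mul_lt_mul_of_pos_left h2 hLR]
    calc -2 * ((L : ℝ) * α * mm) ^ 2 / ((L : ℝ) * c ^ 2)
        = -(2 * ((L : ℝ) * α * mm) ^ 2 / ((L : ℝ) * c ^ 2)) := by ring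
      _ ≤ -lg := neg_le_neg h3
  -- deviation events
  set s1 := (L : ℝ) * α * μ with hs1def
  set s2 := (L : ℝ) * α * |μ'| with hs2def
  have hs1 : 0 < s1 := by positivity
  have hs2 : 0 < s2 := by positivity
  set D1 := {ω | s1 < |(∑ l ∈ Finset.range L, φ (ε l ω)) - (L : ℝ) * μ|} with hD1def
  set D2 := {ω | s2 < |(∑ l ∈ Finset.range L, φ' (ε l ω)) - (L : ℝ) * μ'|} with hD2def
  have hD1 : P D1 ≤ ENNReal.ofReal (δ / 4) + ENNReal.ofReal (δ / 4) := by
    have hb := chernoff_two_sided P ε hmeas hindep hgauss φ hφ_meas 0 B hφ_bdd hBpos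
      L hLpos s1 hs1
    rw [sub_zero] at hb
    refine hb.trans (add_le_add ?_ ?_) <;>
    · apply ENNReal.ofReal_le_ofReal
      apply hnum B μ hBpos hμpos
      calc B ^ 2 / μ ^ 2 * lg / (2 * α ^ 2)
          ≤ max (B ^ 2 / μ ^ 2) ((B' - b') ^ 2 / μ' ^ 2) * lg / (2 * α ^ 2) := by
            gcongr
            exact le_max_left _ _
        _ < (L : ℝ) := hL
  have hD2 : P D2 ≤ ENNReal.ofReal (δ / 4) + ENNReal.ofReal (δ / 4) := by
    rcases eq_or_lt_of_le hb'B' with heq | hlt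
    · -- degenerate: φ' constant
      have hconst : ∀ x, φ' x = b' := fun x =>
        le_antisymm (heq ▸ (hφ'_bdd x).2) (hφ'_bdd x).1
      have hμ'eq : μ' = b' := by
        rw [hμ'def]
        simp only [hconst]
        simp
      have : D2 = ∅ := by
        ext ω
        simp only [hD2def, Set.mem_setOf_eq, Set.mem_empty_iff_false, iff_false, not_lt,
          hconst, hμ'eq, Finset.sum_const, Finset.card_range, nsmul_eq_mul]
        rw [show (L : ℝ) * b' - (L : ℝ) * b' = 0 by ring, abs_zero]
        exact hs2.le
      rw [this, measure_empty]
      exact zero_le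
    · have hb := chernoff_two_sided P ε hmeas hindep hgauss φ' hφ'_meas b' B' hφ'_bdd hlt
        L hLpos s2 hs2
      refine hb.trans (add_le_add ?_ ?_) <;>
      · apply ENNReal.ofReal_le_ofReal
        apply hnum (B' - b') |μ'| (sub_pos.mpr hlt) hμ'abspos
        calc (B' - b') ^ 2 / |μ'| ^ 2 * lg / (2 * α ^ 2)
            = (B' - b') ^ 2 / μ' ^ 2 * lg / (2 * α ^ 2) := by rw [sq_abs]
          _ ≤ max (B ^ 2 / μ ^ 2) ((B' - b') ^ 2 / μ' ^ 2) * lg / (2 * α ^ 2) := by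
              gcongr
              exact le_max_right _ _
          _ < (L : ℝ) := hL
  -- deterministic step
  have hdet : ∀ ω : Ω,
      |(∑ l ∈ Finset.range L, φ (ε l ω)) - (L : ℝ) * μ| ≤ s1 →
      |(∑ l ∈ Finset.range L, φ' (ε l ω)) - (L : ℝ) * μ'| ≤ s2 →
      |(∑ l ∈ Finset.range L, φ' (ε l ω)) / (∑ l ∈ Finset.range L, φ (ε l ω)) - μ' / μ|
        ≤ (2 * α / (1 - α)) * |μ' / μ| := by
    intro ω h1 h2
    set S := ∑ l ∈ Finset.range L, φ (ε l ω) with hSdef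
    set S' := ∑ l ∈ Finset.range L, φ' (ε l ω) with hS'def
    have habs1 : |S - (L : ℝ) * μ| ≤ (L : ℝ) * α * μ := h1
    have habs2 : |S' - (L : ℝ) * μ'| ≤ (L : ℝ) * α * |μ'| := h2
    rw [abs_le] at habs1 habs2
    have hSlow : (L : ℝ) * (1 - α) * μ ≤ S := by nlinarith [habs1.1]
    have hSpos : 0 < S := lt_of_lt_of_le (by nlinarith) hSlow
    have hkey : |S' * μ - μ' * S| ≤ 2 * (L : ℝ) * α * |μ'| * μ := by
      have heq : S' * μ - μ' * S = (S' - (L : ℝ) * μ') * μ - μ' * (S - (L : ℝ) * μ) := by ring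
      rw [heq]
      calc |(S' - (L : ℝ) * μ') * μ - μ' * (S - (L : ℝ) * μ)|
          ≤ |(S' - (L : ℝ) * μ') * μ| + |μ' * (S - (L : ℝ) * μ)| := abs_sub _ _
        _ = |S' - (L : ℝ) * μ'| * μ + |μ'| * |S - (L : ℝ) * μ| := by
            rw [abs_mul, abs_mul, abs_of_pos hμpos]
        _ ≤ ((L : ℝ) * α * |μ'|) * μ + |μ'| * ((L : ℝ) * α * μ) := by
            refine add_le_add (mul_le_mul_of_nonneg_right h2 hμpos.le)
              (mul_le_mul_of_nonneg_left h1 (abs_nonneg _))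
        _ = 2 * (L : ℝ) * α * |μ'| * μ := by ring
    have hfrac : |S' / S - μ' / μ| = |S' * μ - μ' * S| / (S * μ) := by
      rw [div_sub_div _ _ hSpos.ne' hμpos.ne', abs_div, abs_of_pos (mul_pos hSpos hμpos),
        mul_comm S μ']
    rw [hfrac, abs_div, abs_of_pos hμpos]
    calc |S' * μ - μ' * S| / (S * μ) ≤ (2 * (L : ℝ) * α * |μ'| * μ) / (S * μ) :=
          (div_le_div_iff_of_pos_right (mul_pos hSpos hμpos)).mpr hkey
      _ ≤ (2 * (L : ℝ) * α * |μ'| * μ) / (((L : ℝ) * (1 - α) * μ) * μ) := by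
          apply div_le_div_of_nonneg_left (by positivity) (by positivity)
          exact mul_le_mul_of_nonneg_right hSlow hμpos.le
      _ = 2 * α / (1 - α) * (|μ'| / μ) := by
          field_simp
  set Et := {ω | |(∑ l ∈ Finset.range L, φ' (ε l ω)) / (∑ l ∈ Finset.range L, φ (ε l ω)) -
      μ' / μ| ≤ 2 * α / (1 - α) * |μ' / μ|} with hEt
  have hEtc : P Etᶜ ≤ ENNReal.ofReal δ := by
    have hsub : Etᶜ ⊆ D1 ∪ D2 := by
      intro ω hω
      simp only [hEt, Set.mem_compl_iff, Set.mem_setOf_eq, not_le] at hω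
      by_contra hc
      simp only [Set.mem_union, hD1def, hD2def, Set.mem_setOf_eq, not_or, not_lt] at hc
      exact absurd (hdet ω hc.1 hc.2) (not_le.mpr hω)
    refine (measure_mono hsub).trans ((measure_union_le _ _).trans
      ((add_le_add hD1 hD2).trans ?_))
    have hx : ENNReal.ofReal (δ / 4) + ENNReal.ofReal (δ / 4) = ENNReal.ofReal (δ / 2) := by
      rw [← ENNReal.ofReal_add (by positivity) (by positivity)]
      congr 1
      ring
    rw [hx, ← ENNReal.ofReal_add (by positivity) (by positivity)]
    apply ENNReal.ofReal_le_ofReal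
    linarith
  have hfinal : (1 : ENNReal) ≤ P Et + ENNReal.ofReal δ := by
    calc (1 : ENNReal) = P Set.univ := measure_univ.symm
      _ = P (Et ∪ Etᶜ) := by rw [Set.union_compl_self]
      _ ≤ P Et + P Etᶜ := measure_union_le _ _
      _ ≤ P Et + ENNReal.ofReal δ := add_le_add le_rfl hEtc
  have hsum : ENNReal.ofReal (1 - δ) + ENNReal.ofReal δ = 1 := by
    rw [← ENNReal.ofReal_add (by linarith) hδ0.le]
    norm_num
  exact (ENNReal.add_le_add_iff_right ENNReal.ofReal_ne_top).mp (by rw [hsum]; exact hfinal)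
end

section
/- Fix y ∈ ℕ and let g(f) = log(e^f + 1) (the softplus link) and φ(f) = g(f)^y e^{−g(f)} / y!. Then for all f ∈ ℝ: 0 ≤ φ(f) ≤ 1, the first derivative satisfies −1 ≤ φ'(f) ≤ 1, and the second derivative satisfies −2.25 ≤ φ''(f) ≤ 2.25. -/
/-!
Write `φ = p_y ∘ g`, where `p_k(x) = x^k e^{-x} / k!` is the Poisson probability of `k` at rate
`x ≥ 0`, so `0 ≤ p_k ≤ 1`. Differentiating in the rate shifts the index:
`p_k' = p_{k-1} - p_k` (with `p_{-1} = 0`), hence `|p_k'| ≤ 1` and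
`|p_k''| = |p_{k-2} - 2 p_{k-1} + p_k| ≤ 2`. By the chain rule
`φ'' = p_y''(g) g'^2 + p_y'(g) g''`, and `g' = σ ∈ [0, 1]`, `g'' = σ (1 - σ) ∈ [0, 1/4]`,
so `|φ'| ≤ 1` and `|φ''| ≤ 2 + 1/4`.
-/

open Real

section ChainRule

variable {p g : ℝ → ℝ}

lemma abs_deriv_comp_le {x A a : ℝ} (hp : DifferentiableAt ℝ p (g x))
    (hg : DifferentiableAt ℝ g x) (hA : |deriv p (g x)| ≤ A) (ha : |deriv g x| ≤ a) :
    |deriv (p ∘ g) x| ≤ A * a := by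
  rw [deriv_comp x hp hg, abs_mul]
  exact mul_le_mul hA ha (abs_nonneg _) ((abs_nonneg _).trans hA)

lemma deriv_deriv_comp (hp : Differentiable ℝ p) (hp' : Differentiable ℝ (deriv p))
    (hg : Differentiable ℝ g) (hg' : Differentiable ℝ (deriv g)) (x : ℝ) :
    deriv (deriv (p ∘ g)) x =
      deriv (deriv p) (g x) * deriv g x ^ 2 + deriv p (g x) * deriv (deriv g) x := by
  have h : deriv (p ∘ g) = fun x => deriv p (g x) * deriv g x :=
    funext fun x => deriv_comp x (hp (g x)) (hg x)
  rw [h]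
  exact ((((hp' (g x)).hasDerivAt.comp x (hg x).hasDerivAt).mul (hg' x).hasDerivAt).deriv).trans
    (by rw [Function.comp_apply]; ring)

lemma abs_deriv_deriv_comp_le (hp : Differentiable ℝ p) (hp' : Differentiable ℝ (deriv p))
    (hg : Differentiable ℝ g) (hg' : Differentiable ℝ (deriv g)) {x A B a b : ℝ}
    (hA : |deriv p (g x)| ≤ A) (hB : |deriv (deriv p) (g x)| ≤ B)
    (ha : |deriv g x| ≤ a) (hb : |deriv (deriv g) x| ≤ b) :
    |deriv (deriv (p ∘ g)) x| ≤ B * a ^ 2 + A * b := by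
  rw [deriv_deriv_comp hp hp' hg hg']
  have ha2 : |deriv g x| ^ 2 ≤ a ^ 2 := pow_le_pow_left₀ (abs_nonneg _) ha 2
  calc |deriv (deriv p) (g x) * deriv g x ^ 2 + deriv p (g x) * deriv (deriv g) x|
      ≤ |deriv (deriv p) (g x)| * |deriv g x| ^ 2 + |deriv p (g x)| * |deriv (deriv g) x| := by
        rw [← abs_pow, ← abs_mul, ← abs_mul]
        exact abs_add_le _ _
    _ ≤ B * a ^ 2 + A * b := by
        gcongr
        · exact (abs_nonneg _).trans hB
        · exact (abs_nonneg _).trans hA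

end ChainRule

section Poisson

noncomputable def poissonTerm (k : ℕ) (x : ℝ) : ℝ :=
  x ^ k * exp (-x) / k.factorial

variable {x : ℝ}

lemma poissonTerm_nonneg (k : ℕ) (hx : 0 ≤ x) : 0 ≤ poissonTerm k x := by
  unfold poissonTerm; positivity

lemma poissonTerm_le_one (k : ℕ) (hx : 0 ≤ x) : poissonTerm k x ≤ 1 :=
  calc poissonTerm k x = x ^ k / k.factorial * exp (-x) := by unfold poissonTerm; ring
    _ ≤ exp x * exp (-x) := by gcongr; exact pow_div_factorial_le_exp x hx k
    _ = 1 := by rw [← exp_add, add_neg_cancel, exp_zero]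

lemma differentiable_poissonTerm (k : ℕ) : Differentiable ℝ (poissonTerm k) := by
  unfold poissonTerm; fun_prop

lemma deriv_poissonTerm_zero : deriv (poissonTerm 0) = -poissonTerm 0 := by
  funext x
  have h : HasDerivAt (poissonTerm 0) (-poissonTerm 0 x) x := by
    unfold poissonTerm
    simpa using (hasDerivAt_neg x).exp
  exact h.deriv

lemma deriv_poissonTerm_succ (k : ℕ) :
    deriv (poissonTerm (k + 1)) = poissonTerm k - poissonTerm (k + 1) := by
  funext x
  have h : HasDerivAt (poissonTerm (k + 1))
      (((k + 1) * x ^ k * exp (-x) + x ^ (k + 1) * (exp (-x) * -1)) / (k + 1).factorial) x := by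
    unfold poissonTerm
    simpa using ((hasDerivAt_pow (k + 1) x).mul (hasDerivAt_neg x).exp).div_const
      ((k + 1).factorial : ℝ)
  rw [h.deriv, Pi.sub_apply, poissonTerm, poissonTerm, Nat.factorial_succ]
  push_cast
  field_simp
  ring

lemma differentiable_deriv_poissonTerm (k : ℕ) : Differentiable ℝ (deriv (poissonTerm k)) := by
  cases k with
  | zero => rw [deriv_poissonTerm_zero]; exact (differentiable_poissonTerm 0).neg
  | succ k =>
    rw [deriv_poissonTerm_succ]
    exact (differentiable_poissonTerm k).sub (differentiable_poissonTerm (k + 1))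

lemma abs_deriv_poissonTerm_le (k : ℕ) (hx : 0 ≤ x) : |deriv (poissonTerm k) x| ≤ 1 := by
  cases k with
  | zero =>
    rw [deriv_poissonTerm_zero, Pi.neg_apply, abs_neg, abs_of_nonneg (poissonTerm_nonneg 0 hx)]
    exact poissonTerm_le_one 0 hx
  | succ k =>
    rw [deriv_poissonTerm_succ, Pi.sub_apply]
    exact abs_sub_le_of_nonneg_of_le (poissonTerm_nonneg k hx) (poissonTerm_le_one k hx)
      (poissonTerm_nonneg (k + 1) hx) (poissonTerm_le_one (k + 1) hx)

lemma abs_deriv_deriv_poissonTerm_le (k : ℕ) (hx : 0 ≤ x) :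
    |deriv (deriv (poissonTerm k)) x| ≤ 2 := by
  have h0 := poissonTerm_nonneg 0 hx
  have h1 := poissonTerm_le_one 0 hx
  match k with
  | 0 =>
    rw [deriv_poissonTerm_zero, deriv.neg', deriv_poissonTerm_zero]
    simp only [Pi.neg_apply, neg_neg, abs_of_nonneg h0]
    linarith
  | 1 =>
    rw [deriv_poissonTerm_succ, deriv_sub (differentiable_poissonTerm 0 x)
      (differentiable_poissonTerm 1 x), deriv_poissonTerm_zero, deriv_poissonTerm_succ]
    simp only [Pi.neg_apply, Pi.sub_apply]
    have := poissonTerm_nonneg 1 hx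
    have := poissonTerm_le_one 1 hx
    rw [abs_le]; constructor <;> linarith
  | k + 2 =>
    rw [deriv_poissonTerm_succ, deriv_sub (differentiable_poissonTerm (k + 1) x)
      (differentiable_poissonTerm (k + 2) x), deriv_poissonTerm_succ, deriv_poissonTerm_succ]
    simp only [Pi.sub_apply]
    have := poissonTerm_nonneg k hx
    have := poissonTerm_le_one k hx
    have := poissonTerm_nonneg (k + 1) hx
    have := poissonTerm_le_one (k + 1) hx
    have := poissonTerm_nonneg (k + 2) hx
    have := poissonTerm_le_one (k + 2) hx
    rw [abs_le]; constructor <;> linarith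

end Poisson

section Softplus

noncomputable def softplus (x : ℝ) : ℝ := log (exp x + 1)

lemma softplus_pos (x : ℝ) : 0 < softplus x :=
  log_pos (lt_add_of_pos_left 1 (exp_pos x))

lemma hasDerivAt_softplus (x : ℝ) : HasDerivAt softplus (sigmoid x) x := by
  refine (((hasDerivAt_exp x).add_const 1).log (by positivity)).congr_deriv ?_
  rw [sigmoid_def, exp_neg]
  field_simp

lemma deriv_softplus : deriv softplus = sigmoid :=
  funext fun x => (hasDerivAt_softplus x).deriv

lemma differentiable_softplus : Differentiable ℝ softplus :=
  fun x => (hasDerivAt_softplus x).differentiableAt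

lemma abs_deriv_softplus_le (x : ℝ) : |deriv softplus x| ≤ 1 := by
  rw [deriv_softplus, abs_of_nonneg (sigmoid_nonneg x)]
  exact sigmoid_le_one x

lemma abs_deriv_deriv_softplus_le (x : ℝ) : |deriv (deriv softplus) x| ≤ 1 / 4 := by
  rw [deriv_softplus, deriv_sigmoid,
    abs_of_nonneg (mul_nonneg (sigmoid_nonneg x) (sub_nonneg.2 (sigmoid_le_one x)))]
  nlinarith [sq_nonneg (2 * sigmoid x - 1)]

end Softplus

/-- Bounds for the Poisson likelihood with softplus link `g(f) = log(e^f + 1)`,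
`φ(f) = g(f)^y e^{−g(f)} / y!`: `0 ≤ φ ≤ 1`, `−1 ≤ φ' ≤ 1` and `−2.25 ≤ φ'' ≤ 2.25`. -/
theorem poisson_softplus_likelihood_derivative_bounds
    (y : ℕ)
    (g : ℝ → ℝ) (hg : ∀ f : ℝ, g f = Real.log (Real.exp f + 1))
    (φ : ℝ → ℝ)
    (hφ : ∀ f : ℝ, φ f = g f ^ y * Real.exp (-g f) / (Nat.factorial y : ℝ)) :
    ∀ f : ℝ,
      (0 ≤ φ f ∧ φ f ≤ 1) ∧
      (-1 ≤ deriv φ f ∧ deriv φ f ≤ 1) ∧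
      (-(2.25 : ℝ) ≤ deriv (deriv φ) f ∧ deriv (deriv φ) f ≤ (2.25 : ℝ)) := by
  have hg_eq : g = softplus := funext hg
  have hφ_eq : φ = poissonTerm y ∘ softplus := funext fun f => by rw [hφ, hg_eq]; rfl
  subst hφ_eq
  intro f
  have hx := (softplus_pos f).le
  have hφ₁ := abs_deriv_comp_le (differentiable_poissonTerm y _) (differentiable_softplus f)
    (abs_deriv_poissonTerm_le y hx) (abs_deriv_softplus_le f)
  have hφ₂ := abs_deriv_deriv_comp_le (differentiable_poissonTerm y)
    (differentiable_deriv_poissonTerm y) differentiable_softplus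
    (deriv_softplus ▸ differentiable_sigmoid) (abs_deriv_poissonTerm_le y hx)
    (abs_deriv_deriv_poissonTerm_le y hx) (abs_deriv_softplus_le f)
    (abs_deriv_deriv_softplus_le f)
  refine ⟨⟨poissonTerm_nonneg y hx, poissonTerm_le_one y hx⟩, abs_le.1 ?_, abs_le.1 ?_⟩
  · simpa using hφ₁
  · exact hφ₂.trans_eq (by norm_num)
end

section
/- Fix y ∈ ℝ, σ > 0 and ν > 0, let c = Γ((ν+1)/2)/(Γ(ν/2)√(πν) σ), and define the Student's t likelihood φ(f) = c · (1 + (y−f)²/(σ²ν))^{−(ν+1)/2}. Then for all f ∈ ℝ: 0 ≤ φ(f) ≤ c; the first derivative satisfies |φ'(f)| ≤ (c/σ)·((ν+1)/ν)·√(ν/(ν+2)) / ((ν+3)/(ν+2))^{(ν+3)/2}; and the second derivative satisfies −(c/σ²)·(ν+1)/ν ≤ φ''(f) ≤ 2(c/σ²)·((ν+1)/ν)·((ν+2)/(ν+5))^{(ν+5)/2}. -/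
/-!
With `w = (y - f)² / (σ² ν)` and `U = 1 + w`, one has `φ' = c (ν+1)/(σ² ν) · (y - f) U^{-(ν+3)/2}`
and `φ'' = c (ν+1)/(σ² ν) · ((ν+2) w - 1) U^{-(ν+5)/2}`. The two maxima come from Bernoulli's
inequality `1 + p s ≤ (1 + s)^p` (`p ≥ 1`) at `1 + s = a U`, where the scale `a` is chosen so that
equality holds at the extremal point, `w = 1/(ν+2)` for `φ'` and `w = 3/(ν+2)` for `φ''`.
The lower bound on `φ''` only uses `(ν+2) w - 1 ≥ -1` and `U^{-(ν+5)/2} ≤ 1`.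
-/

open Real

theorem hasDerivAt_one_add_sq_div_rpow_neg {y a : ℝ} (ha : 0 < a) (e x : ℝ) :
    HasDerivAt (fun f => (1 + (y - f) ^ 2 / a) ^ (-e))
      (2 * e / a * (y - x) * (1 + (y - x) ^ 2 / a) ^ (-e - 1)) x := by
  have hg : HasDerivAt (fun f : ℝ => 1 + (y - f) ^ 2 / a) (-(2 * (y - x)) / a) x := by
    refine ((((hasDerivAt_id' x).const_sub y).pow 2).div_const a |>.const_add 1).congr_deriv ?_
    push_cast
    ring
  convert hg.rpow_const (p := -e) (Or.inl (by positivity)) using 1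
  ring

theorem hasDerivAt_studentT_kernel {y a : ℝ} (ha : 0 < a) (ν x : ℝ) :
    HasDerivAt (fun f => (1 + (y - f) ^ 2 / a) ^ (-((ν + 1) / 2)))
      ((ν + 1) / a * ((y - x) * (1 + (y - x) ^ 2 / a) ^ (-((ν + 3) / 2)))) x := by
  convert hasDerivAt_one_add_sq_div_rpow_neg ha ((ν + 1) / 2) x using 1
  rw [show -((ν + 1) / 2) - 1 = -((ν + 3) / 2) by ring]
  ring

theorem hasDerivAt_sub_mul_studentT_kernel {y a : ℝ} (ha : 0 < a) (ν x : ℝ) :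
    HasDerivAt (fun f => (y - f) * (1 + (y - f) ^ 2 / a) ^ (-((ν + 3) / 2)))
      (((ν + 2) * ((y - x) ^ 2 / a) - 1) * (1 + (y - x) ^ 2 / a) ^ (-((ν + 5) / 2))) x := by
  have hg : 0 < 1 + (y - x) ^ 2 / a := by positivity
  refine (((hasDerivAt_id' x).const_sub y).mul
    (hasDerivAt_one_add_sq_div_rpow_neg ha ((ν + 3) / 2) x)).congr_deriv ?_
  rw [show -((ν + 3) / 2) - 1 = -((ν + 5) / 2) by ring,
    show -((ν + 3) / 2) = 1 + -((ν + 5) / 2) by ring, rpow_add hg, rpow_one]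
  field_simp
  ring

theorem mul_mul_one_add_rpow_neg_le {m w : ℝ} (hm : 0 ≤ m) (hw : 0 ≤ w) :
    m * w * (1 + w) ^ (-(m + 1)) ≤ (m / (m + 1)) ^ (m + 1) := by
  have hx : 0 ≤ m / (m + 1) * (1 + w) := by positivity
  have h := one_add_mul_self_le_rpow_one_add (s := m / (m + 1) * (1 + w) - 1) (by linarith)
    (p := m + 1) (by linarith)
  rw [add_sub_cancel, mul_rpow (by positivity) (by positivity)] at h
  rw [rpow_neg (by positivity), ← div_eq_mul_inv, div_le_iff₀ (by positivity)]
  have e : m * w = 1 + (m + 1) * (m / (m + 1) * (1 + w) - 1) := by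
    field_simp
    ring
  linarith

theorem sub_one_mul_one_add_rpow_neg_le {m w : ℝ} (hm : 0 ≤ m) (hw : 0 ≤ w) :
    (m * w - 1) * (1 + w) ^ (-((m + 3) / 2)) ≤ 2 * (m / (m + 3)) ^ ((m + 3) / 2) := by
  have hx : 0 ≤ m / (m + 3) * (1 + w) := by positivity
  have h := one_add_mul_self_le_rpow_one_add (s := m / (m + 3) * (1 + w) - 1) (by linarith)
    (p := (m + 3) / 2) (by linarith)
  rw [add_sub_cancel, mul_rpow (by positivity) (by positivity)] at h
  rw [rpow_neg (by positivity), ← div_eq_mul_inv, div_le_iff₀ (by positivity)]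
  have e : m * w - 1 = 2 * (1 + (m + 3) / 2 * (m / (m + 3) * (1 + w) - 1)) := by
    field_simp
    ring
  rw [e, mul_assoc]
  gcongr

theorem neg_one_le_sub_one_mul_one_add_rpow_neg {m w q : ℝ} (hm : 0 ≤ m) (hw : 0 ≤ w)
    (hq : 0 ≤ q) : -1 ≤ (m * w - 1) * (1 + w) ^ (-q) := by
  have h0 : 0 ≤ (1 + w) ^ (-q) := by positivity
  have h1 : (1 + w) ^ (-q) ≤ 1 := rpow_le_one_of_one_le_of_nonpos (by linarith) (by linarith)
  nlinarith [mul_nonneg (mul_nonneg hm hw) h0]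

theorem abs_mul_one_add_sq_div_rpow_neg_le {σ ν : ℝ} (hσ : 0 < σ) (hν : 0 < ν) (t : ℝ) :
    |t| * (1 + t ^ 2 / (σ ^ 2 * ν)) ^ (-((ν + 3) / 2)) ≤
      σ * √(ν / (ν + 2)) / ((ν + 3) / (ν + 2)) ^ ((ν + 3) / 2) := by
  set w := t ^ 2 / (σ ^ 2 * ν) with hw
  have ht : t ^ 2 = σ ^ 2 * ν * w := by rw [hw]; field_simp
  have hU : 0 < 1 + w := by positivity
  have hmax := mul_mul_one_add_rpow_neg_le (m := ν + 2) (by linarith) (by positivity : 0 ≤ w)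
  rw [show ν + 2 + 1 = ν + 3 by ring] at hmax
  rw [← pow_le_pow_iff_left₀ (by positivity) (by positivity) two_ne_zero]
  calc (|t| * (1 + w) ^ (-((ν + 3) / 2))) ^ 2
      = σ ^ 2 * ν / (ν + 2) * ((ν + 2) * w * (1 + w) ^ (-(ν + 3))) := by
        rw [mul_pow, sq_abs, ← rpow_mul_natCast hU.le, ht]
        field_simp
        ring_nf
    _ ≤ σ ^ 2 * ν / (ν + 2) * ((ν + 2) / (ν + 3)) ^ (ν + 3) := by gcongr
    _ = (σ * √(ν / (ν + 2)) / ((ν + 3) / (ν + 2)) ^ ((ν + 3) / 2)) ^ 2 := by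
        rw [div_pow, mul_pow, sq_sqrt (by positivity), ← rpow_mul_natCast (by positivity),
          show (ν + 3) / 2 * ((2 : ℕ) : ℝ) = ν + 3 by push_cast; ring,
          div_rpow (by positivity) (by positivity), div_rpow (by positivity) (by positivity)]
        field_simp

/-- Bounds for the Student's t likelihood
`φ(f) = c·(1 + (y−f)²/(σ²ν))^{−(ν+1)/2}` with `c = Γ((ν+1)/2)/(Γ(ν/2)√(πν)σ)`:
`0 ≤ φ ≤ c`,
`|φ'| ≤ (c/σ)·((ν+1)/ν)·√(ν/(ν+2)) / ((ν+3)/(ν+2))^{(ν+3)/2}`, and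
`−(c/σ²)·(ν+1)/ν ≤ φ'' ≤ 2(c/σ²)·((ν+1)/ν)·((ν+2)/(ν+5))^{(ν+5)/2}`. -/
theorem studentT_likelihood_derivative_bounds
    (y σ ν : ℝ) (hσ : 0 < σ) (hν : 0 < ν)
    (c : ℝ)
    (hc : c = Real.Gamma ((ν + 1) / 2) /
        (Real.Gamma (ν / 2) * Real.sqrt (Real.pi * ν) * σ))
    (φ : ℝ → ℝ)
    (hφ : ∀ f : ℝ, φ f = c * (1 + (y - f) ^ 2 / (σ ^ 2 * ν)) ^ (-((ν + 1) / 2))) :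
    ∀ f : ℝ,
      (0 ≤ φ f ∧ φ f ≤ c) ∧
      |deriv φ f| ≤
        (c / σ) * ((ν + 1) / ν) * Real.sqrt (ν / (ν + 2)) /
          ((ν + 3) / (ν + 2)) ^ ((ν + 3) / 2) ∧
      (-((c / σ ^ 2) * ((ν + 1) / ν)) ≤ deriv (deriv φ) f ∧
        deriv (deriv φ) f ≤
          2 * (c / σ ^ 2) * ((ν + 1) / ν) * ((ν + 2) / (ν + 5)) ^ ((ν + 5) / 2)) := by
  have hc0 : 0 < c := by
    have := Gamma_pos_of_pos (s := (ν + 1) / 2) (by positivity)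
    have := Gamma_pos_of_pos (s := ν / 2) (by positivity)
    rw [hc]
    positivity
  have ha : 0 < σ ^ 2 * ν := by positivity
  have hK : 0 ≤ c * (ν + 1) / (σ ^ 2 * ν) := by positivity
  obtain rfl : φ = fun f => c * (1 + (y - f) ^ 2 / (σ ^ 2 * ν)) ^ (-((ν + 1) / 2)) := funext hφ
  have hφ' : deriv (fun f => c * (1 + (y - f) ^ 2 / (σ ^ 2 * ν)) ^ (-((ν + 1) / 2))) =
      fun x => c * (ν + 1) / (σ ^ 2 * ν) *
        ((y - x) * (1 + (y - x) ^ 2 / (σ ^ 2 * ν)) ^ (-((ν + 3) / 2))) :=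
    funext fun x => ((hasDerivAt_studentT_kernel ha ν x).const_mul c).deriv.trans (by ring)
  intro f
  dsimp only
  have hφ'' := ((hasDerivAt_sub_mul_studentT_kernel (y := y) ha ν f).const_mul
    (c * (ν + 1) / (σ ^ 2 * ν))).deriv
  rw [← hφ'] at hφ''
  have hw : 0 ≤ (y - f) ^ 2 / (σ ^ 2 * ν) := by positivity
  refine ⟨⟨by positivity, mul_le_of_le_one_right hc0.le
    (rpow_le_one_of_one_le_of_nonpos (le_add_of_nonneg_right hw) (by linarith))⟩, ?_, ?_, ?_⟩
  · rw [hφ', abs_mul, abs_of_nonneg hK, abs_mul,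
      abs_of_pos (rpow_pos_of_pos (by positivity : 0 < 1 + (y - f) ^ 2 / (σ ^ 2 * ν)) _)]
    calc _ ≤ c * (ν + 1) / (σ ^ 2 * ν) *
          (σ * √(ν / (ν + 2)) / ((ν + 3) / (ν + 2)) ^ ((ν + 3) / 2)) := by
          gcongr
          exact abs_mul_one_add_sq_div_rpow_neg_le hσ hν (y - f)
      _ = _ := by field_simp
  · calc -(c / σ ^ 2 * ((ν + 1) / ν)) = c * (ν + 1) / (σ ^ 2 * ν) * (-1) := by field_simp
      _ ≤ _ := by
        rw [hφ'']
        gcongr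
        exact neg_one_le_sub_one_mul_one_add_rpow_neg (by positivity) hw (by positivity)
  · rw [hφ'']
    have h := sub_one_mul_one_add_rpow_neg_le (m := ν + 2) (by positivity) hw
    rw [show ν + 2 + 3 = ν + 5 by ring] at h
    calc _ ≤ c * (ν + 1) / (σ ^ 2 * ν) * (2 * ((ν + 2) / (ν + 5)) ^ ((ν + 5) / 2)) := by
          gcongr
      _ = _ := by field_simp
end

section
/- Let μ ∈ ℝ, σ > 0, n > 1, and let q(f) = N(f; μ, σ²) and h₂(f) = N(f; μ, nσ²) be Gaussian densities. Let ℓ : ℝ → [0, ℓ_max] be a function, set r = σ√(log n / (1 − 1/n)), and suppose m₁ := sup over f ∈ [μ − r, μ + r] of ℓ(f) satisfies m₁ ≤ ℓ_max/√n. Then ℓ_max · h₂(f) ≥ q(f) · ℓ(f) for all f ∈ ℝ; i.e. h₂ with constant K = ℓ_max is a valid rejection-sampling envelope for the unnormalized product q(f)ℓ(f). -/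
/-!
With `v = σ²` and `w = nσ²`, the ratio of the two densities is
`q(f) / h₂(f) = √n · exp(-(f - μ)² (1/v - 1/w) / 2)`. It is at most `√n` everywhere, and at most
`1` as soon as `(f - μ)² (1/v - 1/w) ≥ log n`, i.e. outside `[μ - r, μ + r]`. Inside the
interval the factor `√n` is compensated by `ℓ ≤ m₁ ≤ ℓ_max / √n`; outside, `ℓ ≤ ℓ_max` suffices.
-/

open Real Set ProbabilityTheory
open scoped NNReal

lemma gaussianPDFReal_eq_mul_gaussianPDFReal (μ : ℝ) {v w : ℝ≥0} (hv : v ≠ 0) (hw : w ≠ 0)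
    (x : ℝ) :
    gaussianPDFReal μ v x =
      √(w / v) * rexp (-((x - μ) ^ 2 * (1 / v - 1 / w)) / 2) * gaussianPDFReal μ w x := by
  have hv' : (0 : ℝ) < v := by positivity
  have hw' : (0 : ℝ) < w := by positivity
  simp only [gaussianPDFReal]
  calc (√(2 * π * v))⁻¹ * rexp (-(x - μ) ^ 2 / (2 * v))
      = (√(w / v) * (√(2 * π * w))⁻¹) *
          rexp (-((x - μ) ^ 2 * (1 / v - 1 / w)) / 2 + -(x - μ) ^ 2 / (2 * w)) := by
        congr 1
        · rw [Real.sqrt_div' _ hv'.le, Real.sqrt_mul' _ hv'.le, Real.sqrt_mul' _ hw'.le]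
          field_simp
        · congr 1
          field_simp
          ring
    _ = _ := by rw [Real.exp_add]; ring

lemma gaussianPDFReal_toNNReal (μ : ℝ) {s : ℝ} (hs : 0 ≤ s) (x : ℝ) :
    gaussianPDFReal μ s.toNNReal x = 1 / (√s * √(2 * π)) * rexp (-(x - μ) ^ 2 / (2 * s)) := by
  rw [gaussianPDFReal, Real.coe_toNNReal _ hs, Real.sqrt_mul' _ hs, one_div, mul_comm √s]

lemma gaussianPDFReal_le_sqrt_div_mul (μ : ℝ) {v w : ℝ≥0} (hv : v ≠ 0) (hvw : v ≤ w) (x : ℝ) :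
    gaussianPDFReal μ v x ≤ √(w / v) * gaussianPDFReal μ w x := by
  have hw : w ≠ 0 := (lt_of_lt_of_le (pos_iff_ne_zero.2 hv) hvw).ne'
  rw [gaussianPDFReal_eq_mul_gaussianPDFReal μ hv hw]
  have hexp : rexp (-((x - μ) ^ 2 * (1 / v - 1 / w)) / 2) ≤ 1 := by
    rw [Real.exp_le_one_iff, neg_div, neg_nonpos]
    have hinv : (1 : ℝ) / w ≤ 1 / v :=
      one_div_le_one_div_of_le (by positivity) (by exact_mod_cast hvw)
    exact div_nonneg (mul_nonneg (sq_nonneg _) (sub_nonneg.2 hinv)) zero_le_two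
  gcongr
  · exact gaussianPDFReal_nonneg _ _ _
  · exact mul_le_of_le_one_right (Real.sqrt_nonneg _) hexp

lemma gaussianPDFReal_le_gaussianPDFReal (μ : ℝ) {v w : ℝ≥0} (hv : v ≠ 0) (hw : w ≠ 0) {x : ℝ}
    (hx : log (w / v) ≤ (x - μ) ^ 2 * (1 / v - 1 / w)) :
    gaussianPDFReal μ v x ≤ gaussianPDFReal μ w x := by
  rw [gaussianPDFReal_eq_mul_gaussianPDFReal μ hv hw]
  refine mul_le_of_le_one_left (gaussianPDFReal_nonneg _ _ _) ?_
  have hwv : (0 : ℝ) < w / v := by positivity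
  calc √(w / v) * rexp (-((x - μ) ^ 2 * (1 / v - 1 / w)) / 2)
      ≤ √(w / v) * rexp (-log (w / v) / 2) := by gcongr
    _ = 1 := by
      rw [neg_div, Real.exp_neg, ← Real.log_sqrt hwv.le, Real.exp_log (by positivity)]
      exact mul_inv_cancel₀ (by positivity)

lemma mul_le_mul_of_le_mul_of_le_div {q h ℓ L c : ℝ} (hc : 0 < c) (hh : 0 ≤ h) (hℓ : 0 ≤ ℓ)
    (hqh : q ≤ c * h) (hℓL : ℓ ≤ L / c) : q * ℓ ≤ L * h :=
  calc q * ℓ ≤ c * h * (L / c) := mul_le_mul hqh hℓL hℓ (by positivity)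
    _ = L * h := by field_simp

lemma log_le_sq_mul_inv_sub_inv {σ n r x : ℝ} (hσ : 0 < σ) (hn : 1 < n)
    (hr : r = σ * √(log n / (1 - 1 / n))) (hx : r ≤ |x|) :
    log n ≤ x ^ 2 * (1 / σ ^ 2 - 1 / (n * σ ^ 2)) := by
  have hn0 : 0 < n := by linarith
  have hgap : 0 < 1 - 1 / n := by rw [sub_pos, div_lt_one hn0]; exact hn
  have hr2 : r ^ 2 = σ ^ 2 * (log n / (1 - 1 / n)) := by
    rw [hr, mul_pow, Real.sq_sqrt (div_nonneg (log_nonneg hn.le) hgap.le)]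
  have hrx : r ^ 2 ≤ x ^ 2 := by
    rw [← sq_abs x]; exact pow_le_pow_left₀ (by rw [hr]; positivity) hx 2
  calc log n = r ^ 2 * (1 / σ ^ 2 - 1 / (n * σ ^ 2)) := by
        have : n - 1 ≠ 0 := by linarith
        rw [hr2]; field_simp
    _ ≤ x ^ 2 * (1 / σ ^ 2 - 1 / (n * σ ^ 2)) := by
        gcongr
        exact sub_nonneg.2 <| one_div_le_one_div_of_le (by positivity) <|
          le_mul_of_one_le_left (sq_nonneg σ) hn.le

/-- Validity of the broadened-Gaussian rejection-sampling envelope: if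
`ℓ : ℝ → [0, ℓ_max]` and the supremum `m₁` of `ℓ` over the interval `[μ − r, μ + r]`
bounded by the intersection points of the Gaussian densities `q = N(μ, σ²)` and
`h₂ = N(μ, nσ²)` satisfies `m₁ ≤ ℓ_max/√n`, then `ℓ_max · h₂(f) ≥ q(f) · ℓ(f)` for
all `f`. -/
theorem rejection_sampling_envelope_valid
    (μ σ n : ℝ) (hσ : 0 < σ) (hn : 1 < n)
    (q h₂ : ℝ → ℝ)
    (hq : ∀ f : ℝ, q f =
      (1 / (σ * Real.sqrt (2 * Real.pi))) * Real.exp (-(f - μ) ^ 2 / (2 * σ ^ 2)))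
    (hh₂ : ∀ f : ℝ, h₂ f =
      (1 / (Real.sqrt (n * σ ^ 2) * Real.sqrt (2 * Real.pi))) *
        Real.exp (-(f - μ) ^ 2 / (2 * (n * σ ^ 2))))
    (r : ℝ) (hr : r = σ * Real.sqrt (Real.log n / (1 - 1 / n)))
    (ℓ : ℝ → ℝ) (ℓmax : ℝ)
    (hℓ : ∀ f : ℝ, ℓ f ∈ Set.Icc 0 ℓmax)
    (hm₁ : sSup (ℓ '' Set.Icc (μ - r) (μ + r)) ≤ ℓmax / Real.sqrt n) :
    ∀ f : ℝ, q f * ℓ f ≤ ℓmax * h₂ f := by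
  intro f
  have hσ2 : 0 < σ ^ 2 := by positivity
  have hnσ2 : 0 < n * σ ^ 2 := by positivity
  have hv : (σ ^ 2).toNNReal ≠ 0 := by positivity
  have hvw : (σ ^ 2).toNNReal ≤ (n * σ ^ 2).toNNReal := by gcongr; nlinarith
  have hwv : ((n * σ ^ 2).toNNReal / (σ ^ 2).toNNReal : ℝ) = n := by
    rw [Real.coe_toNNReal _ hnσ2.le, Real.coe_toNNReal _ hσ2.le, mul_div_cancel_right₀ n hσ2.ne']
  have hq' : q f = gaussianPDFReal μ (σ ^ 2).toNNReal f := by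
    rw [hq, gaussianPDFReal_toNNReal μ hσ2.le, Real.sqrt_sq hσ.le]
  have hh₂' : h₂ f = gaussianPDFReal μ (n * σ ^ 2).toNNReal f := by
    rw [hh₂, gaussianPDFReal_toNNReal μ hnσ2.le]
  rw [hq', hh₂']
  obtain ⟨hℓ0, hℓmax⟩ := hℓ f
  by_cases hf : f ∈ Icc (μ - r) (μ + r)
  · have hbdd : BddAbove (ℓ '' Icc (μ - r) (μ + r)) :=
      ⟨ℓmax, forall_mem_image.2 fun x _ ↦ (hℓ x).2⟩
    refine mul_le_mul_of_le_mul_of_le_div (sqrt_pos.2 (by linarith))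
      (gaussianPDFReal_nonneg _ _ _) hℓ0 ?_ ((le_csSup hbdd (mem_image_of_mem ℓ hf)).trans hm₁)
    simpa only [hwv] using gaussianPDFReal_le_sqrt_div_mul μ hv hvw f
  · rw [← mem_Icc_iff_abs_le, not_le, abs_sub_comm] at hf
    have hx := log_le_sq_mul_inv_sub_inv hσ hn hr hf.le
    rw [mul_comm ℓmax]
    refine mul_le_mul (gaussianPDFReal_le_gaussianPDFReal μ hv (by positivity) ?_) hℓmax hℓ0
      (gaussianPDFReal_nonneg _ _ _)
    rwa [hwv, Real.coe_toNNReal _ hnσ2.le, Real.coe_toNNReal _ hσ2.le]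
end

section
/- Let α ∈ (0,1), ζ > 0, and set ν = αζ. Let a, A, b, B be real numbers with A ≠ 0, B ≥ ζ, such that a and A have the same sign, (1−α)|A| ≤ |a| ≤ (1+α)|A|, b ≥ 0 and (1−α)B ≤ b ≤ (1+α)B. Then the smoothed ratio satisfies |a/(b+ν) − A/B| ≤ max{ (1+α)/(1−α) − 1, 1 − (1−α)/(1+2α) } · |A/B| ≤ (3α/(1−α)) · |A|/B. In particular, if additionally α ≤ 1/2, |A| ≤ B* and B ≥ ζ, then |a/(b+ν) − A/B| ≤ 6αB*/ζ. -/
/-! Since `b ≥ (1 - α) B` and `0 < αζ ≤ αB`, the smoothed denominator stays within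
`[(1 - α) B, (1 + 2α) B]`; together with `(1 - α)|A| ≤ |a| ≤ (1 + α)|A|` this traps `|a|/(b + αζ)`
between `(1 - α)/(1 + 2α)` and `(1 + α)/(1 - α)` times `|A|/B`, and the sign condition lets us
compare absolute values. The cruder bounds follow from `1 + 2α ≥ 1 - α` and `1/(1 - α) ≤ 2`. -/

lemma abs_sub_eq_abs_abs_sub_abs_of_mul_pos {x y : ℝ} (h : 0 < x * y) :
    |x - y| = |(|x| - |y|)| := by
  rcases pos_and_pos_or_neg_and_neg_of_mul_pos h with ⟨hx, hy⟩ | ⟨hx, hy⟩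
  · rw [abs_of_pos hx, abs_of_pos hy]
  · rw [abs_of_neg hx, abs_of_neg hy, ← abs_neg]
    ring_nf

lemma abs_sub_le_max_mul_of_mem_Icc {x R l u : ℝ} (hR : 0 ≤ R)
    (h : x ∈ Set.Icc (l * R) (u * R)) : |x - R| ≤ max (u - 1) (1 - l) * R := by
  obtain ⟨hlo, hhi⟩ := h
  have hu : (u - 1) * R ≤ max (u - 1) (1 - l) * R :=
    mul_le_mul_of_nonneg_right (le_max_left _ _) hR
  have hl : (1 - l) * R ≤ max (u - 1) (1 - l) * R :=
    mul_le_mul_of_nonneg_right (le_max_right _ _) hR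
  rw [abs_le]
  constructor <;> linarith

lemma div_mem_Icc_of_mem_Icc {x X y Y lx ux ly uy : ℝ} (hx : 0 ≤ x) (hly : 0 < ly * Y)
    (hx_mem : x ∈ Set.Icc (lx * X) (ux * X)) (hy_mem : y ∈ Set.Icc (ly * Y) (uy * Y)) :
    x / y ∈ Set.Icc (lx / uy * (X / Y)) (ux / ly * (X / Y)) := by
  obtain ⟨hx_lo, hx_hi⟩ := hx_mem
  obtain ⟨hy_lo, hy_hi⟩ := hy_mem
  rw [← mul_div_mul_comm, ← mul_div_mul_comm]
  exact ⟨div_le_div₀ hx hx_lo (hly.trans_le hy_lo) hy_hi,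
    div_le_div₀ (hx.trans hx_hi) hx_hi hly hy_lo⟩

lemma max_relative_error_factor_le {α : ℝ} (hα0 : 0 ≤ α) (hα1 : α < 1) :
    max ((1 + α) / (1 - α) - 1) (1 - (1 - α) / (1 + 2 * α)) ≤ 3 * α / (1 - α) := by
  have h1α : 0 < 1 - α := by linarith
  have h12α : 0 < 1 + 2 * α := by linarith
  have hupper : (1 + α) / (1 - α) - 1 = 2 * α / (1 - α) := by
    field_simp
    ring
  have hlower : 1 - (1 - α) / (1 + 2 * α) = 3 * α / (1 + 2 * α) := by
    field_simp
    ring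
  rw [hupper, hlower]
  exact max_le (by gcongr; linarith) (by gcongr; linarith)

lemma three_mul_div_one_sub_le {α : ℝ} (hα0 : 0 ≤ α) (hα : α ≤ 1 / 2) :
    3 * α / (1 - α) ≤ 6 * α := by
  rw [div_le_iff₀ (by linarith)]
  nlinarith

theorem smoothed_ratio_perturbation_bound_general
    (α ζ a A b B : ℝ)
    (hα0 : 0 < α) (hα1 : α < 1) (hζ : 0 < ζ)
    (hB : ζ ≤ B)
    (hsign : 0 < a * A)
    (ha_lb : (1 - α) * |A| ≤ |a|) (ha_ub : |a| ≤ (1 + α) * |A|)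
    (hb_lb : (1 - α) * B ≤ b) (hb_ub : b ≤ (1 + α) * B) :
    |a / (b + α * ζ) - A / B| ≤
        max ((1 + α) / (1 - α) - 1) (1 - (1 - α) / (1 + 2 * α)) * |A / B| ∧
    max ((1 + α) / (1 - α) - 1) (1 - (1 - α) / (1 + 2 * α)) * |A / B| ≤
        (3 * α / (1 - α)) * (|A| / B) ∧
    (∀ Bstar : ℝ, α ≤ 1 / 2 → |A| ≤ Bstar →
      |a / (b + α * ζ) - A / B| ≤ 6 * α * Bstar / ζ) := by
  have hBpos : 0 < B := hζ.trans_le hB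
  have hden_pos : 0 < b + α * ζ := by nlinarith
  have hA_div : |A / B| = |A| / B := by rw [abs_div, abs_of_pos hBpos]
  have hden_mem : b + α * ζ ∈ Set.Icc ((1 - α) * B) ((1 + 2 * α) * B) :=
    ⟨by nlinarith, by nlinarith⟩
  have hsign_div : 0 < a / (b + α * ζ) * (A / B) := by
    rw [← mul_div_mul_comm]
    positivity
  have hratio := div_mem_Icc_of_mem_Icc (abs_nonneg a) (by nlinarith) ⟨ha_lb, ha_ub⟩ hden_mem
  have hfirst : |a / (b + α * ζ) - A / B| ≤
      max ((1 + α) / (1 - α) - 1) (1 - (1 - α) / (1 + 2 * α)) * |A / B| := by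
    rw [abs_sub_eq_abs_abs_sub_abs_of_mul_pos hsign_div, abs_div a, abs_of_pos hden_pos, hA_div]
    exact abs_sub_le_max_mul_of_mem_Icc (by positivity) hratio
  have hsecond : max ((1 + α) / (1 - α) - 1) (1 - (1 - α) / (1 + 2 * α)) * |A / B| ≤
      (3 * α / (1 - α)) * (|A| / B) := by
    rw [hA_div]
    exact mul_le_mul_of_nonneg_right (max_relative_error_factor_le hα0.le hα1) (by positivity)
  refine ⟨hfirst, hsecond, fun Bstar hα_half hA_le => ?_⟩
  calc |a / (b + α * ζ) - A / B| ≤ (3 * α / (1 - α)) * (|A| / B) := hfirst.trans hsecond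
    _ ≤ (6 * α) * (Bstar / ζ) :=
      mul_le_mul (three_mul_div_one_sub_le hα0.le hα_half)
        (div_le_div₀ ((abs_nonneg A).trans hA_le) hA_le hζ hB) (by positivity) (by positivity)
    _ = 6 * α * Bstar / ζ := by ring

/-- Deterministic perturbation bound for the smoothed ratio used by smooth-bMC:
with smoothing constant `ν = αζ` added to the denominator, if `a` approximates `A ≠ 0`
within relative error `α` (with the same sign) and `b ≥ 0` approximates `B ≥ ζ` within
relative error `α`, then
`|a/(b+ν) − A/B| ≤ max{(1+α)/(1−α) − 1, 1 − (1−α)/(1+2α)}·|A/B| ≤ (3α/(1−α))·|A|/B`;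
in particular if `α ≤ 1/2` and `|A| ≤ B*`, then `|a/(b+ν) − A/B| ≤ 6αB*/ζ`. -/
theorem smoothed_ratio_perturbation_bound
    (α ζ a A b B : ℝ)
    (hα0 : 0 < α) (hα1 : α < 1) (hζ : 0 < ζ)
    (hA : A ≠ 0) (hB : ζ ≤ B)
    (hsign : 0 < a * A)
    (ha_lb : (1 - α) * |A| ≤ |a|) (ha_ub : |a| ≤ (1 + α) * |A|)
    (hb0 : 0 ≤ b)
    (hb_lb : (1 - α) * B ≤ b) (hb_ub : b ≤ (1 + α) * B) :
    |a / (b + α * ζ) - A / B| ≤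
        max ((1 + α) / (1 - α) - 1) (1 - (1 - α) / (1 + 2 * α)) * |A / B| ∧
    max ((1 + α) / (1 - α) - 1) (1 - (1 - α) / (1 + 2 * α)) * |A / B| ≤
        (3 * α / (1 - α)) * (|A| / B) ∧
    (∀ Bstar : ℝ, α ≤ 1 / 2 → |A| ≤ Bstar →
      |a / (b + α * ζ) - A / B| ≤ 6 * α * Bstar / ζ) :=
  smoothed_ratio_perturbation_bound_general α ζ a A b B hα0 hα1 hζ hB hsign ha_lb ha_ub hb_lb hb_ub
end
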